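/- Let n ∈ ℕ and q ∈ ℂ with q ≠ 0. The (n+1)×(n+1) complex matrix N with entries N_{km} = C(k, m)_{q⁻¹} satisfies σ₂(q,n)·N = 1 and N·σ₂(q,n) = 1; that is, σ₂(q,n) is invertible with inverse entries σ₂(q,n)⁻¹_{km} = C(k,m)_{q⁻¹}. -/

import Mathlib

/-
Write `L = (C(k,m)_p)` with `p = q⁻¹`. Expanding `C(k+1,m+1)_p` by the q-Pascal rule shows that
the rows of `M = ((-1)^(k+m) p^C(k-m,2) C(k,m)_p)` satisfy `M_{k+1,m+1} = M_{k,m} - p^k M_{k,m+1}`,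
and together with the same rule for the columns of `L` this gives `M L = 1` by induction on the row.
For `p = q⁻¹` the matrix `M` is `σ₂(q,n)`, and a one-sided inverse of a square matrix is two-sided.
-/

/-- The Gaussian ($q$-)binomial coefficient `C(n,k)_q`, defined by the recursion
`C(n+1,k)_q = C(n,k-1)_q + q^k * C(n,k)_q`, with `C(n,0)_q = C(n,n)_q = 1` and
`C(n,k)_q = 0` for `k > n`. -/
noncomputable def qBinom (q : ℂ) : ℕ → ℕ → ℂ
  | 0, 0 => 1
  | 0, _ + 1 => 0
  | _ + 1, 0 => 1
  | n + 1, k + 1 => qBinom q n k + q ^ (k + 1) * qBinom q n (k + 1)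

/-- The matrix `σ₁(q,n)` with entries `σ₁(q,n)_{km} = C(n-k, n-m)_q`. -/
noncomputable def sigma1 (q : ℂ) (n : ℕ) : Matrix (Fin (n + 1)) (Fin (n + 1)) ℂ :=
  fun k m => qBinom q (n - k.val) (n - m.val)

/-- The matrix `σ₂(q,n)` with entries
`σ₂(q,n)_{km} = (-1)^{k+m} q^{-(k-m)(k-m-1)/2} C(k,m)_{q⁻¹}` for `m ≤ k`, and `0` otherwise. -/
noncomputable def sigma2 (q : ℂ) (n : ℕ) : Matrix (Fin (n + 1)) (Fin (n + 1)) ℂ :=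
  fun k m =>
    if m.val ≤ k.val then
      (-1 : ℂ) ^ (k.val + m.val) *
        q ^ (-(((k.val - m.val) * (k.val - m.val - 1) / 2 : ℕ) : ℤ)) *
        qBinom q⁻¹ k.val m.val
    else 0

/-- The matrix `S(q)` with entries `S(q)_{km} = (-1)^k q^{-k(k-1)/2}` when `k+m = n`,
and `0` otherwise. -/
noncomputable def Smat (q : ℂ) (n : ℕ) : Matrix (Fin (n + 1)) (Fin (n + 1)) ℂ :=
  fun k m =>
    if k.val + m.val = n then (-1 : ℂ) ^ k.val * q ^ (-((k.val * (k.val - 1) / 2 : ℕ) : ℤ))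
    else 0

/-- `A^♯`, the matrix with entries `(A^♯)_{ij} = A_{n-i, n-j}`. -/
noncomputable def msharp {n : ℕ} (A : Matrix (Fin (n + 1)) (Fin (n + 1)) ℂ) :
    Matrix (Fin (n + 1)) (Fin (n + 1)) ℂ :=
  fun i j => A i.rev j.rev

lemma qBinom_zero_right (p : ℂ) (k : ℕ) : qBinom p k 0 = 1 := by
  cases k <;> rfl

lemma qBinom_succ_succ (p : ℂ) (k m : ℕ) :
    qBinom p (k + 1) (m + 1) = qBinom p k m + p ^ (m + 1) * qBinom p k (m + 1) := rfl

lemma qBinom_eq_zero_of_lt (p : ℂ) {k m : ℕ} (h : k < m) : qBinom p k m = 0 := by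
  induction k generalizing m with
  | zero => obtain ⟨m, rfl⟩ := Nat.exists_eq_succ_of_ne_zero (by omega : m ≠ 0); rfl
  | succ k ih =>
    obtain ⟨m, rfl⟩ := Nat.exists_eq_succ_of_ne_zero (by omega : m ≠ 0)
    rw [qBinom_succ_succ, ih (by omega), ih (by omega), mul_zero, add_zero]

/-- Vanishes for `m > k` because `qBinom p k m` does, so unlike `sigma2` it needs no case split. -/
noncomputable def qBinomInv (p : ℂ) (k m : ℕ) : ℂ :=
  (-1) ^ (k + m) * p ^ (k - m).choose 2 * qBinom p k m

lemma qBinomInv_zero_left (p : ℂ) (m : ℕ) : qBinomInv p 0 m = if m = 0 then 1 else 0 := by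
  cases m <;> simp [qBinomInv, qBinom]

lemma qBinomInv_succ_zero (p : ℂ) (k : ℕ) :
    qBinomInv p (k + 1) 0 = -p ^ k * qBinomInv p k 0 := by
  simp only [qBinomInv, qBinom_zero_right, Nat.sub_zero, Nat.choose_succ_succ',
    Nat.choose_one_right]
  ring

lemma qBinomInv_succ_succ (p : ℂ) (k m : ℕ) :
    qBinomInv p (k + 1) (m + 1) = qBinomInv p k m - p ^ k * qBinomInv p k (m + 1) := by
  rcases lt_or_ge m k with hmk | hkm
  · obtain ⟨d, rfl⟩ := Nat.exists_eq_add_of_lt hmk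
    have hchoose : (m + d + 1 - m).choose 2 = (m + d + 1 - (m + 1)).choose 2 + d := by
      rw [show m + d + 1 - m = d + 1 by omega, show m + d + 1 - (m + 1) = d by omega,
        Nat.choose_succ_succ', Nat.choose_one_right, add_comm]
    simp only [qBinomInv, qBinom_succ_succ, Nat.add_sub_add_right, hchoose]
    ring
  · simp only [qBinomInv, qBinom_succ_succ, qBinom_eq_zero_of_lt p (Nat.lt_succ_of_le hkm),
      mul_zero, add_zero, Nat.add_sub_add_right]
    ring

/-- Summing up to an arbitrary bound `N > k` lets the induction absorb the index shift. -/
theorem sum_qBinomInv_mul_qBinom (p : ℂ) (k j : ℕ) {N : ℕ} (hN : k < N) :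
    ∑ m ∈ Finset.range N, qBinomInv p k m * qBinom p m j = if k = j then 1 else 0 := by
  induction k generalizing j N with
  | zero =>
    obtain ⟨N, rfl⟩ := Nat.exists_eq_succ_of_ne_zero (by omega : N ≠ 0)
    cases j <;> simp [qBinomInv_zero_left, qBinom]
  | succ k ih =>
    obtain ⟨N, rfl⟩ := Nat.exists_eq_succ_of_ne_zero (by omega : N ≠ 0)
    have hrow : ∑ m ∈ Finset.range N, qBinomInv p k (m + 1) * qBinom p (m + 1) j
        + qBinomInv p k 0 * qBinom p 0 j = if k = j then 1 else 0 := by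
      rw [← Finset.sum_range_succ' (fun m => qBinomInv p k m * qBinom p m j)]
      exact ih j (by omega)
    have hshift : ∑ m ∈ Finset.range N, qBinomInv p k m * qBinom p (m + 1) j
        = (if k + 1 = j then 1 else 0) + p ^ k * if k = j then 1 else 0 := by
      cases j with
      | zero =>
        have hk := ih 0 (show k < N by omega)
        simp only [qBinom_zero_right] at hk ⊢
        rw [hk]
        split_ifs <;> simp_all
      | succ j =>
        simp only [qBinom_succ_succ, mul_add, Finset.sum_add_distrib, mul_left_comm _ (p ^ _),
          ← Finset.mul_sum, ih j (show k < N by omega),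
          ih (j + 1) (show k < N by omega)]
        split_ifs <;> simp_all
    rw [Finset.sum_range_succ', qBinomInv_succ_zero]
    simp only [qBinomInv_succ_succ, sub_mul, Finset.sum_sub_distrib, mul_assoc, ← Finset.mul_sum]
    linear_combination hshift - p ^ k * hrow

lemma sigma2_apply (q : ℂ) (n : ℕ) (k m : Fin (n + 1)) :
    sigma2 q n k m = qBinomInv q⁻¹ k m := by
  unfold sigma2 qBinomInv
  split_ifs with hmk
  · rw [← Nat.choose_two_right, zpow_neg, zpow_natCast, ← inv_pow]
  · rw [qBinom_eq_zero_of_lt _ (by omega), mul_zero]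

theorem sigma2_inverse_general (n : ℕ) (q : ℂ)
    (N : Matrix (Fin (n + 1)) (Fin (n + 1)) ℂ)
    (hN : ∀ k m : Fin (n + 1), N k m = qBinom q⁻¹ k.val m.val) :
    sigma2 q n * N = 1 ∧ N * sigma2 q n = 1 := by
  have hinv : sigma2 q n * N = 1 := by
    ext k j
    simp only [Matrix.mul_apply, Matrix.one_apply, Fin.ext_iff, sigma2_apply, hN]
    rw [Fin.sum_univ_eq_sum_range (fun m => qBinomInv q⁻¹ k m * qBinom q⁻¹ m j)]
    exact sum_qBinomInv_mul_qBinom _ _ _ k.is_lt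
  exact ⟨hinv, mul_eq_one_comm.mp hinv⟩

/-- For `q ≠ 0`, the matrix `N` with entries `N_{km} = C(k,m)_{q⁻¹}`
is a two-sided inverse of `σ₂(q,n)`. -/
theorem sigma2_inverse (n : ℕ) (q : ℂ) (hq : q ≠ 0)
    (N : Matrix (Fin (n + 1)) (Fin (n + 1)) ℂ)
    (hN : ∀ k m : Fin (n + 1), N k m = qBinom q⁻¹ k.val m.val) :
    sigma2 q n * N = 1 ∧ N * sigma2 q n = 1 :=
  sigma2_inverse_general n q N hN
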